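/- arXiv:2401.17182 — 5 statements merged into one kernel-verified Lean document; each statement's English description precedes it below -/
import Mathlib

section
/- For every integer T ≥ 2 and every real δ such that sin((δ+π)/(2T)) ≠ 0 and sin((δ−π)/(2T)) ≠ 0, the amplitude α_T(δ) admits the closed form α_T(δ) = −(√2 / T) · exp(i (δ/2)(1 − 1/T)) · sin(π/(2T)) · cos(δ/(2T)) · cos(δ/2) / ( sin((δ+π)/(2T)) · sin((δ−π)/(2T)) ). -/
/-!
Expanding `sin θ = (e^{iθ} - e^{-iθ}) / (2i)` splits `α_T(δ)` into two geometric sums of ratio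
`e^{ix}` with `x = (δ ± π)/T`, and `∑_{k<T} e^{ikx} = e^{i(T-1)x/2} sin(Tx/2) / sin(x/2)`.
For these `x` the numerators are `sin((δ ± π)/2) = ±cos(δ/2)` and the phases are
`±i e^{i(δ/2)(1 - 1/T)}`, so the two terms differ only in their denominators, whose difference is
`sin((δ+π)/(2T)) - sin((δ-π)/(2T)) = 2 sin(π/(2T)) cos(δ/(2T))`.
-/

/-- The post-QPE amplitude function `α_T(δ) = (√2/T) ∑_{τ=0}^{T-1} sin(π(τ+1/2)/T) e^{iδτ/T}`. -/
noncomputable def amp (T : ℕ) (δ : ℝ) : ℂ :=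
  (Real.sqrt 2 / T) * ∑ τ ∈ Finset.range T,
    (Real.sin (Real.pi * (τ + 1 / 2) / T) : ℂ) * Complex.exp (Complex.I * δ * τ / T)

open Finset Real

namespace Complex

theorem exp_mul_I_sub_one (x : ℂ) : exp (x * I) - 1 = 2 * I * exp (x / 2 * I) * sin (x / 2) := by
  have h₀ : exp (x / 2 * I) * exp (-(x / 2) * I) = 1 := by
    rw [← exp_add]; ring_nf; exact exp_zero
  have h₁ : exp (x / 2 * I) * exp (x / 2 * I) = exp (x * I) := by rw [← exp_add]; ring_nf
  rw [sin]
  linear_combination h₀ - h₁ + (exp (x / 2 * I) * (exp (x / 2 * I) - exp (-(x / 2) * I))) * I_sq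

theorem two_I_mul_sin_mul_exp_mul_I (u v : ℂ) :
    2 * I * sin u * exp (v * I) = exp ((v + u) * I) - exp ((v - u) * I) := by
  rw [sin, sub_eq_add_neg v, add_mul, add_mul, exp_add, exp_add, neg_mul]
  linear_combination (exp (v * I) * (exp (-(u * I)) - exp (u * I))) * I_sq

theorem sum_range_exp_mul_I (n : ℕ) (x : ℂ) (hx : sin (x / 2) ≠ 0) :
    ∑ k ∈ range n, exp (k * x * I) =
      exp ((n - 1) * x / 2 * I) * sin (n * x / 2) / sin (x / 2) := by
  have hx₁ : exp (x * I) - 1 ≠ 0 := by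
    rw [exp_mul_I_sub_one]; simp [hx, exp_ne_zero]
  have hgeom := geom_sum_eq (sub_ne_zero.mp hx₁) n
  simp only [← exp_nat_mul, ← mul_assoc] at hgeom
  rw [hgeom, exp_mul_I_sub_one, exp_mul_I_sub_one,
    show n * x / 2 * I = (n - 1) * x / 2 * I + x / 2 * I by ring, exp_add]
  field_simp [exp_ne_zero, hx]

theorem sum_range_exp_add_mul_I (n : ℕ) (a x : ℂ) (hx : sin (x / 2) ≠ 0) :
    ∑ k ∈ range n, exp ((a + k * x) * I) =
      exp ((a + (n - 1) * x / 2) * I) * sin (n * x / 2) / sin (x / 2) := by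
  simp only [add_mul a, exp_add, ← mul_sum, sum_range_exp_mul_I n x hx]
  ring

theorem sum_range_sin_mul_exp_mul_I (n : ℕ) (a b c : ℂ) (hp : sin ((c + b) / 2) ≠ 0)
    (hm : sin ((c - b) / 2) ≠ 0) :
    ∑ k ∈ range n, sin (a + k * b) * exp (k * c * I) =
      (exp ((a + (n - 1) * (c + b) / 2) * I) * sin (n * (c + b) / 2) / sin ((c + b) / 2) -
        exp ((-a + (n - 1) * (c - b) / 2) * I) * sin (n * (c - b) / 2) / sin ((c - b) / 2)) /
        (2 * I) := by
  rw [eq_div_iff (by simp), ← sum_range_exp_add_mul_I n a _ hp,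
    ← sum_range_exp_add_mul_I n _ _ hm, ← sum_sub_distrib, sum_mul]
  refine sum_congr rfl fun k _ ↦ ?_
  rw [mul_comm, ← mul_assoc, two_I_mul_sin_mul_exp_mul_I]
  ring_nf

theorem sum_range_sin_pi_mul_add_half_mul_exp (T : ℕ) (d : ℂ) (hT : (T : ℂ) ≠ 0)
    (hp : sin ((d + π) / (2 * T)) ≠ 0) (hm : sin ((d - π) / (2 * T)) ≠ 0) :
    ∑ τ ∈ range T, sin (π * (τ + 1 / 2) / T) * exp (I * d * τ / T) =
      -exp (I * (d / 2) * (1 - 1 / T)) * sin (π / (2 * T)) * cos (d / (2 * T)) * cos (d / 2) /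
        (sin ((d + π) / (2 * T)) * sin ((d - π) / (2 * T))) := by
  have hhalf_p : (d / T + π / T) / 2 = (d + π) / (2 * T) := by field_simp
  have hhalf_m : (d / T - π / T) / 2 = (d - π) / (2 * T) := by field_simp
  have hp' : sin ((d / T + π / T) / 2) ≠ 0 := hhalf_p ▸ hp
  have hm' : sin ((d / T - π / T) / 2) ≠ 0 := hhalf_m ▸ hm
  have hsum := sum_range_sin_mul_exp_mul_I T (π / (2 * T)) (π / T) (d / T) hp' hm'
  have hphase_p : (π / (2 * T) + (T - 1) * (d / T + π / T) / 2) * I =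
      π / 2 * I + I * (d / 2) * (1 - 1 / T) := by field_simp; ring
  have hphase_m : (-(π / (2 * T)) + (T - 1) * (d / T - π / T) / 2) * I =
      -π / 2 * I + I * (d / 2) * (1 - 1 / T) := by field_simp; ring
  have hnum_p : T * (d / T + π / T) / 2 = d / 2 + π / 2 := by field_simp
  have hnum_m : T * (d / T - π / T) / 2 = d / 2 - π / 2 := by field_simp
  have hsub : sin ((d + π) / (2 * T)) - sin ((d - π) / (2 * T)) =
      2 * sin (π / (2 * T)) * cos (d / (2 * T)) := by
    rw [sin_sub_sin, show ((d + π) / (2 * T) - (d - π) / (2 * T)) / 2 = π / (2 * T) by ring,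
      show ((d + π) / (2 * T) + (d - π) / (2 * T)) / 2 = d / (2 * T) by ring]
  have hreindex : ∑ τ ∈ range T, sin (π * (τ + 1 / 2) / T) * exp (I * d * τ / T) =
      ∑ τ ∈ range T, sin (π / (2 * T) + τ * (π / T)) * exp (τ * (d / T) * I) :=
    sum_congr rfl fun τ _ ↦ by congr 2 <;> ring
  rw [hreindex, hsum, hphase_p, hphase_m, hnum_p, hnum_m, hhalf_p, hhalf_m, exp_add, exp_add,
    exp_pi_div_two_mul_I, exp_neg_pi_div_two_mul_I, sin_add_pi_div_two, sin_sub_pi_div_two]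
  field_simp
  linear_combination -cos (d / 2) * hsub

end Complex

theorem stmt_0_general (T : ℕ) (δ : ℝ)
    (h1 : Real.sin ((δ + Real.pi) / (2 * T)) ≠ 0)
    (h2 : Real.sin ((δ - Real.pi) / (2 * T)) ≠ 0) :
    amp T δ =
      -(Real.sqrt 2 / T : ℂ) * Complex.exp (Complex.I * (δ / 2) * (1 - 1 / T)) *
        (Real.sin (Real.pi / (2 * T)) : ℂ) * (Real.cos (δ / (2 * T)) : ℂ) *
        (Real.cos (δ / 2) : ℂ) /
        ((Real.sin ((δ + Real.pi) / (2 * T)) : ℂ) *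
          (Real.sin ((δ - Real.pi) / (2 * T)) : ℂ)) := by
  have hT : (T : ℂ) ≠ 0 := by
    rintro hT
    simp [Nat.cast_eq_zero.mp hT] at h1
  rw [← Complex.ofReal_ne_zero] at h1 h2
  rw [amp]
  push_cast at h1 h2 ⊢
  rw [Complex.sum_range_sin_pi_mul_add_half_mul_exp T δ hT h1 h2]
  ring

theorem stmt_0 (T : ℕ) (hT : 2 ≤ T) (δ : ℝ)
    (h1 : Real.sin ((δ + Real.pi) / (2 * T)) ≠ 0)
    (h2 : Real.sin ((δ - Real.pi) / (2 * T)) ≠ 0) :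
    amp T δ =
      -(Real.sqrt 2 / T : ℂ) * Complex.exp (Complex.I * (δ / 2) * (1 - 1 / T)) *
        (Real.sin (Real.pi / (2 * T)) : ℂ) * (Real.cos (δ / (2 * T)) : ℂ) *
        (Real.cos (δ / 2) : ℂ) /
        ((Real.sin ((δ + Real.pi) / (2 * T)) : ℂ) *
          (Real.sin ((δ - Real.pi) / (2 * T)) : ℂ)) :=
  stmt_0_general T δ h1 h2
end

section
/- For every integer T ≥ 2 and every real δ such that sin((δ+π)/(2T)) ≠ 0 and sin((δ−π)/(2T)) ≠ 0, the magnitude of the amplitude satisfies |α_T(δ)| = (√2 / T) · sin(π/(2T)) · |cos(δ/(2T)) · cos(δ/2)| / ( |sin((δ+π)/(2T))| · |sin((δ−π)/(2T))| ). -/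
open Complex Finset

theorem Complex.exp_two_mul_mul_I_sub_one (w : ℂ) :
    exp (2 * w * I) - 1 = 2 * I * exp (w * I) * sin w := by
  rw [show 2 * w * I = w * I + w * I by ring, exp_add, exp_mul_I]
  linear_combination sin_sq_add_cos_sq w - sin w ^ 2 * I_mul_I

theorem Complex.geom_sum_exp_two_mul_mul_I_mul_sin (w : ℂ) (n : ℕ) :
    (∑ τ ∈ range n, exp (2 * w * I) ^ τ) * sin w = exp ((n - 1) * w * I) * sin (n * w) := by
  have hgeom := geom_sum_mul (exp (2 * w * I)) n
  rw [← exp_nat_mul, show (n : ℂ) * (2 * w * I) = 2 * (n * w) * I by ring,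
    exp_two_mul_mul_I_sub_one, exp_two_mul_mul_I_sub_one,
    show (n : ℂ) * w * I = w * I + (n - 1) * w * I by ring, exp_add] at hgeom
  refine mul_left_cancel₀ (by simp [exp_ne_zero] : 2 * I * exp (w * I) ≠ 0) ?_
  linear_combination hgeom

theorem Complex.two_mul_I_mul_sin_mul_exp (a b : ℂ) (k : ℕ) :
    2 * I * (sin (a * (k + 1 / 2)) * exp (I * b * k)) =
      exp (a / 2 * I) * exp (2 * ((b + a) / 2) * I) ^ k
        - exp (-(a / 2) * I) * exp (2 * ((b - a) / 2) * I) ^ k := by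
  calc _ = exp (a * (k + 1 / 2) * I) * exp (I * b * k)
        - exp (-(a * (k + 1 / 2)) * I) * exp (I * b * k) := by
        rw [← cos_add_sin_I, ← cos_sub_sin_I]; ring
    _ = _ := by
        simp only [← exp_nat_mul, ← exp_add]
        congr 2 <;> ring

theorem Complex.sum_sin_mul_exp_mul_sin_mul_sin (n : ℕ) (a b : ℂ) (hna : n * a = Real.pi) :
    (∑ τ ∈ range n, sin (a * (τ + 1 / 2)) * exp (I * b * τ))
      * sin ((b + a) / 2) * sin ((b - a) / 2) =
      -(exp ((n - 1) * b / 2 * I) * (cos (n * b / 2) * cos (b / 2) * sin (a / 2))) := by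
  have hsum : 2 * I * ∑ τ ∈ range n, sin (a * (τ + 1 / 2)) * exp (I * b * τ) =
      exp (a / 2 * I) * ∑ τ ∈ range n, exp (2 * ((b + a) / 2) * I) ^ τ
        - exp (-(a / 2) * I) * ∑ τ ∈ range n, exp (2 * ((b - a) / 2) * I) ^ τ := by
    simp only [mul_sum, ← sum_sub_distrib, two_mul_I_mul_sin_mul_exp]
  have hgeomA := geom_sum_exp_two_mul_mul_I_mul_sin ((b + a) / 2) n
  have hgeomB := geom_sum_exp_two_mul_mul_I_mul_sin ((b - a) / 2) n
  have hsinA : sin (n * ((b + a) / 2)) = cos (n * b / 2) := by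
    rw [← sin_add_pi_div_two, ← hna]; ring_nf
  have hsinB : sin (n * ((b - a) / 2)) = -cos (n * b / 2) := by
    rw [← sin_sub_pi_div_two, ← hna]; ring_nf
  have hI : exp (n * a / 2 * I) = I := by rw [hna, exp_pi_div_two_mul_I]
  have hphaseA : exp (a / 2 * I) * exp ((n - 1) * ((b + a) / 2) * I) =
      exp ((n - 1) * b / 2 * I) * I := by
    rw [← exp_add, show a / 2 * I + (n - 1) * ((b + a) / 2) * I =
      (n - 1) * b / 2 * I + n * a / 2 * I by ring, exp_add, hI]
  have hphaseB : exp (-(a / 2) * I) * exp ((n - 1) * ((b - a) / 2) * I) =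
      exp ((n - 1) * b / 2 * I) * -I := by
    rw [← exp_add, show -(a / 2) * I + (n - 1) * ((b - a) / 2) * I =
      (n - 1) * b / 2 * I + -(n * a / 2 * I) by ring, exp_add, exp_neg, hI, inv_I]
  have hdiff : sin ((b - a) / 2) - sin ((b + a) / 2) = -(2 * cos (b / 2) * sin (a / 2)) := by
    rw [sin_sub_sin, show ((b - a) / 2 - (b + a) / 2) / 2 = -(a / 2) by ring,
      show ((b - a) / 2 + (b + a) / 2) / 2 = b / 2 by ring, sin_neg]
    ring
  rw [hsinA] at hgeomA
  rw [hsinB] at hgeomB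
  refine mul_left_cancel₀ (by simp : 2 * I ≠ 0) ?_
  linear_combination sin ((b + a) / 2) * sin ((b - a) / 2) * hsum
    + exp (a / 2 * I) * sin ((b - a) / 2) * hgeomA - exp (-(a / 2) * I) * sin ((b + a) / 2) * hgeomB
    + cos (n * b / 2) * sin ((b - a) / 2) * hphaseA + cos (n * b / 2) * sin ((b + a) / 2) * hphaseB
    + exp ((n - 1) * b / 2 * I) * I * cos (n * b / 2) * hdiff

theorem norm_sum_sin_mul_exp_mul_abs_sin_mul_abs_sin (n : ℕ) (a b : ℝ) (hna : n * a = Real.pi) :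
    ‖∑ τ ∈ range n, (Real.sin (a * (τ + 1 / 2)) : ℂ) * exp (I * b * τ)‖
      * |Real.sin ((b + a) / 2)| * |Real.sin ((b - a) / 2)| =
      |Real.cos (n * b / 2) * Real.cos (b / 2)| * |Real.sin (a / 2)| := by
  have hnorm := congrArg norm (sum_sin_mul_exp_mul_sin_mul_sin n a b (by exact_mod_cast hna))
  rw [show ((n : ℂ) - 1) * b / 2 * I = (((n - 1) * b / 2 : ℝ) : ℂ) * I by push_cast; ring] at hnorm
  simp only [norm_mul, norm_neg, norm_exp_ofReal_mul_I, one_mul] at hnorm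
  simp only [abs_mul, ← Real.norm_eq_abs, ← norm_real, ofReal_sin, ofReal_cos]
  push_cast
  exact hnorm

theorem stmt_1 (T : ℕ) (hT : 2 ≤ T) (δ : ℝ)
    (h1 : Real.sin ((δ + Real.pi) / (2 * T)) ≠ 0)
    (h2 : Real.sin ((δ - Real.pi) / (2 * T)) ≠ 0) :
    ‖amp T δ‖ =
      Real.sqrt 2 / T * Real.sin (Real.pi / (2 * T)) *
        |Real.cos (δ / (2 * T)) * Real.cos (δ / 2)| /
        (|Real.sin ((δ + Real.pi) / (2 * T))| * |Real.sin ((δ - Real.pi) / (2 * T))|) := by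
  have hT0 : (0 : ℝ) < T := Nat.cast_pos.2 (by omega)
  have hamp : amp T δ = Real.sqrt 2 / T *
      ∑ τ ∈ range T, (Real.sin (Real.pi / T * (τ + 1 / 2)) : ℂ) * exp (I * (δ / T : ℝ) * τ) := by
    unfold amp
    congr 1
    refine sum_congr rfl fun τ _ => ?_
    push_cast
    ring_nf
  have key := norm_sum_sin_mul_exp_mul_abs_sin_mul_abs_sin T (Real.pi / T) (δ / T)
    (by field_simp)
  rw [show (δ / T + Real.pi / T) / 2 = (δ + Real.pi) / (2 * T) by ring,
    show (δ / T - Real.pi / T) / 2 = (δ - Real.pi) / (2 * T) by ring,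
    show T * (δ / T) / 2 = δ / 2 by field_simp, show δ / T / 2 = δ / (2 * T) by ring,
    show Real.pi / T / 2 = Real.pi / (2 * T) by ring] at key
  have hsin : 0 < Real.sin (Real.pi / (2 * T)) :=
    Real.sin_pos_of_pos_of_lt_pi (by positivity) (div_lt_self Real.pi_pos (by norm_cast; omega))
  rw [abs_of_pos hsin, abs_mul] at key
  rw [hamp, norm_mul, norm_div, norm_real, Real.norm_of_nonneg (Real.sqrt_nonneg 2), norm_natCast,
    eq_div_iff (by positivity), abs_mul]
  linear_combination (Real.sqrt 2 / T) * key
end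

section
/- For every integer T ≥ 3 and every real δ with 2π ≤ |δ| ≤ πT, the amplitude magnitude obeys the bound |α_T(δ)| ≤ 8π/δ². -/
/-!
Writing the sine as a difference of exponentials splits `α_T(δ)` into two geometric series with
ratios `e^{i(δ ± π)/T}`, whose `T`-th powers are both `-e^{iδ}`. Summing them gives, with
`x = δ/(2T)` and `h = π/(2T)`,
`|α_T(δ)| · T |sin(x - h) sin(x + h)| = √2 |cos(δ/2) cos x sin h|`.
For `2π ≤ δ ≤ πT` we have `2h ≤ x ≤ π/2`, and the cubic Taylor bound for sine gives
`sin(x - h) sin(x + h) = sin² x - sin² h ≥ sin² x - x²/4 ≥ x² cos x / 2`,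
hence `|α_T(δ)| ≤ 2h cos x / (T x² cos x / 2) = 8π/δ²`. Negative `δ` follow by conjugation.
-/

open Finset
open scoped Real

theorem sum_odd_pow_sub_mul_pow_mul {R : Type*} [CommRing R] {p r : R} (q : R) {n : ℕ}
    (hpr : p * r = 1) (hp : p ^ (2 * n) = -1) :
    (∑ τ ∈ range n, (p ^ (2 * τ + 1) - r ^ (2 * τ + 1)) * q ^ τ) * ((q - p ^ 2) * (q * p ^ 2 - 1))
      = (q ^ n + 1) * (q + 1) * (p ^ 3 - p) := by
  have hr : r ^ (2 * n) = -1 := by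
    have h : (p * r) ^ (2 * n) = 1 := by rw [hpr, one_pow]
    linear_combination r ^ (2 * n) * hp - h
  have hsplit : ∀ τ ∈ range n, (p ^ (2 * τ + 1) - r ^ (2 * τ + 1)) * q ^ τ
      = p * (p ^ 2 * q) ^ τ - r * (r ^ 2 * q) ^ τ := fun τ _ => by ring
  have gp := geom_sum_mul (p ^ 2 * q) n
  have gr := geom_sum_mul (r ^ 2 * q) n
  rw [mul_pow, ← pow_mul, hp] at gp
  rw [mul_pow, ← pow_mul, hr] at gr
  rw [sum_congr rfl hsplit, sum_sub_distrib, ← mul_sum, ← mul_sum]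
  set Sp := ∑ τ ∈ range n, (p ^ 2 * q) ^ τ
  set Sr := ∑ τ ∈ range n, (r ^ 2 * q) ^ τ
  linear_combination (p * (q - p ^ 2)) * gp - (r * p ^ 2 * (q * p ^ 2 - 1)) * gr
    + (r * Sr * (q * p ^ 2 - 1) * q * (p * r + 1) + (q ^ n + 1) * p * (q * p ^ 2 - 1)) * hpr

namespace Real

theorem sq_mul_one_add_two_mul_cos_le {x : ℝ} (hx₀ : 0 ≤ x) (hx : x ^ 2 ≤ 6) :
    x ^ 2 * (1 + 2 * cos x) ≤ 4 * sin x ^ 2 := by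
  have hsin : 0 ≤ x - x ^ 3 / 6 := by nlinarith
  have hsin_half : 0 ≤ x / 2 - (x / 2) ^ 3 / 6 := by nlinarith
  have hs : (x - x ^ 3 / 6) ^ 2 ≤ sin x ^ 2 := pow_le_pow_left₀ hsin (sin_ge_sub_cube hx₀) 2
  have hs' : (x / 2 - (x / 2) ^ 3 / 6) ^ 2 ≤ sin (x / 2) ^ 2 :=
    pow_le_pow_left₀ hsin_half (sin_ge_sub_cube (by positivity)) 2
  have hcos : cos x = 1 - 2 * sin (x / 2) ^ 2 := by
    rw [← cos_two_mul_eq_one_sub, mul_div_cancel₀ _ two_ne_zero]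
  -- after the Taylor bounds the slack is `x ^ 2 * ((1 - x ^ 2 / 6) ^ 2 + x ^ 6 / 576)`
  nlinarith [pow_nonneg hx₀ 8, pow_nonneg hx₀ 4, sq_nonneg (x - x ^ 3 / 6)]

theorem sq_mul_cos_le_two_mul_sin_sub_mul_sin_add {x h : ℝ} (hh : 0 ≤ h) (hhx : 2 * h ≤ x)
    (hx : x ^ 2 ≤ 6) : x ^ 2 * cos x ≤ 2 * (sin (x - h) * sin (x + h)) := by
  have hprod : sin (x - h) * sin (x + h) = sin x ^ 2 - sin h ^ 2 := by
    rw [sin_sub, sin_add]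
    linear_combination sin x ^ 2 * sin_sq_add_cos_sq h - sin h ^ 2 * sin_sq_add_cos_sq x
  have hsin_h : sin h ^ 2 ≤ x ^ 2 / 4 := by nlinarith [sin_sq_le_sq (x := h)]
  nlinarith [sq_mul_one_add_two_mul_cos_le (by linarith : 0 ≤ x) hx]

end Real

namespace Complex

theorem norm_exp_mul_I_sub_exp_mul_I (a b : ℝ) :
    ‖exp (a * I) - exp (b * I)‖ = 2 * |Real.sin ((a - b) / 2)| := by
  have h : exp (a * I) - exp (b * I) = exp (b * I) * (exp (I * ↑(a - b)) - 1) := by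
    rw [mul_sub, ← exp_add, mul_one]; push_cast; ring_nf
  rw [h, norm_mul, norm_exp_ofReal_mul_I, one_mul, norm_exp_I_mul_ofReal_sub_one, norm_mul,
    Real.norm_eq_abs, Real.norm_eq_abs, abs_two]

theorem norm_exp_mul_I_sub_one (a : ℝ) : ‖exp (a * I) - 1‖ = 2 * |Real.sin (a / 2)| := by
  simpa using norm_exp_mul_I_sub_exp_mul_I a 0

theorem norm_exp_mul_I_add_one (a : ℝ) : ‖exp (a * I) + 1‖ = 2 * |Real.cos (a / 2)| := by
  rw [← sub_neg_eq_add, ← exp_pi_mul_I, norm_exp_mul_I_sub_exp_mul_I, sub_div,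
    Real.sin_sub_pi_div_two, abs_neg]

end Complex

open Complex in
theorem amp_mul_eq (T : ℕ) (hT : T ≠ 0) (δ : ℝ) :
    amp T δ * ((exp (↑(δ / T) * I) - exp (↑(π / T) * I)) * (exp (↑((δ + π) / T) * I) - 1))
      = √2 / T * (-I / 2) * ((exp (δ * I) + 1) * (exp (↑(δ / T) * I) + 1)
          * (exp (↑(π / (2 * T)) * I) * (exp (↑(π / T) * I) - 1))) := by
  have hT' : (T : ℝ) ≠ 0 := Nat.cast_ne_zero.mpr hT
  set h : ℝ := π / (2 * T)
  set p := exp (h * I)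
  set q := exp (↑(δ / T) * I)
  have hpr : p * exp (↑(-h) * I) = 1 := by rw [← exp_add]; push_cast; simp
  have hp_sq : p ^ 2 = exp (↑(π / T) * I) := by
    rw [← exp_nat_mul]; congr 1; simp only [h]; push_cast; field_simp
  have hp : p ^ (2 * T) = -1 := by
    rw [pow_mul, hp_sq, ← exp_nat_mul, ← exp_pi_mul_I]; congr 1; push_cast; field_simp
  have hterm : ∀ τ ∈ range T, (Real.sin (π * (τ + 1 / 2) / T) : ℂ) * exp (I * δ * τ / T)
      = -I / 2 * ((p ^ (2 * τ + 1) - exp (↑(-h) * I) ^ (2 * τ + 1)) * q ^ τ) := by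
    intro τ _
    have hangle : ((2 * τ + 1 : ℕ) : ℂ) * (↑h * I) = ↑(π * (τ + 1 / 2) / T) * I := by
      simp only [h]; push_cast; field_simp
    have hphase : (τ : ℂ) * (↑(δ / T) * I) = I * δ * τ / T := by push_cast; ring
    simp only [p, q, ← exp_nat_mul, hphase, ofReal_neg, neg_mul, mul_neg, hangle, ofReal_sin,
      Complex.sin]
    ring
  have hqT : q ^ T = exp (δ * I) := by
    rw [← exp_nat_mul]; congr 1; push_cast; field_simp
  have hqp : q * p ^ 2 = exp (↑((δ + π) / T) * I) := by
    rw [hp_sq, ← exp_add]; push_cast; ring_nf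
  rw [← hp_sq, ← hqp, ← hqT, amp, sum_congr rfl hterm, ← mul_sum]
  linear_combination √2 / T * (-I / 2) * sum_odd_pow_sub_mul_pow_mul q hpr hp

open Complex in
theorem norm_amp_mul (T : ℕ) (hT : T ≠ 0) (δ : ℝ) :
    ‖amp T δ‖ * (T * (|Real.sin (δ / (2 * T) - π / (2 * T))| * |Real.sin (δ / (2 * T) + π / (2 * T))|))
      = √2 * (|Real.cos (δ / 2)| * |Real.cos (δ / (2 * T))| * |Real.sin (π / (2 * T))|) := by
  have hnorm := congrArg norm (amp_mul_eq T hT δ)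
  simp only [norm_mul, norm_div, norm_neg, norm_I, norm_exp_ofReal_mul_I,
    norm_exp_mul_I_sub_exp_mul_I, norm_exp_mul_I_sub_one, norm_exp_mul_I_add_one, norm_real,
    norm_natCast, Real.norm_eq_abs, abs_of_nonneg (Real.sqrt_nonneg 2), Complex.norm_two] at hnorm
  rw [show (δ / T - π / T) / 2 = δ / (2 * T) - π / (2 * T) by ring,
    show (δ + π) / T / 2 = δ / (2 * T) + π / (2 * T) by ring,
    show δ / T / 2 = δ / (2 * T) by ring, show π / T / 2 = π / (2 * T) by ring] at hnorm
  linear_combination (norm := skip) (T / 4 : ℝ) * hnorm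
  field_simp
  ring

open ComplexConjugate in
theorem amp_neg (T : ℕ) (δ : ℝ) : amp T (-δ) = conj (amp T δ) := by
  simp only [amp, map_mul, map_div₀, map_sum, Complex.conj_ofReal, map_natCast, ← Complex.exp_conj,
    Complex.conj_I, Complex.ofReal_neg]
  congr 1; refine sum_congr rfl fun τ _ => ?_; ring_nf

theorem norm_amp_abs (T : ℕ) (δ : ℝ) : ‖amp T |δ|‖ = ‖amp T δ‖ := by
  rcases abs_choice δ with h | h <;> rw [h]
  rw [amp_neg, Complex.norm_conj]

theorem norm_amp_le_of_two_pi_le (T : ℕ) {δ : ℝ} (h1 : 2 * π ≤ δ) (h2 : δ ≤ π * T) :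
    ‖amp T δ‖ ≤ 8 * π / δ ^ 2 := by
  have hT : (2 : ℝ) ≤ T := le_of_mul_le_mul_left (by linarith) Real.pi_pos
  have hT₀ : T ≠ 0 := by rintro rfl; norm_num at hT
  have hδ : δ ≠ 0 := by linarith [Real.pi_pos]
  have hh : 0 < π / (2 * T) := by positivity
  have hhx : 2 * (π / (2 * T)) ≤ δ / (2 * T) := by
    rw [← mul_div_assoc]; gcongr
  have hx : δ / (2 * T) ≤ π / 2 := by
    rw [div_le_div_iff₀ (by positivity) two_pos]; nlinarith
  have hscale : 8 * π / δ ^ 2 * (T * ((δ / (2 * T)) ^ 2 / 2)) = 2 * (π / (2 * T)) := by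
    field_simp; ring
  have key := norm_amp_mul T hT₀ δ
  set x := δ / (2 * T)
  set h := π / (2 * T)
  have hsin_sub : 0 < Real.sin (x - h) := Real.sin_pos_of_pos_of_lt_pi (by linarith) (by linarith)
  have hsin_add : 0 < Real.sin (x + h) := Real.sin_pos_of_pos_of_lt_pi (by linarith) (by linarith)
  have hcos : 0 ≤ Real.cos x := Real.cos_nonneg_of_mem_Icc ⟨by linarith, hx⟩
  have hsq := Real.sq_mul_cos_le_two_mul_sin_sub_mul_sin_add hh.le hhx
    (by nlinarith [Real.pi_lt_d2])
  have hsqrt : √2 ≤ 2 := by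
    rw [Real.sqrt_le_left two_pos.le]; norm_num
  refine le_of_mul_le_mul_right ?_ (by positivity : 0 < (T : ℝ) * (|Real.sin (x - h)| * |Real.sin (x + h)|))
  calc ‖amp T δ‖ * (T * (|Real.sin (x - h)| * |Real.sin (x + h)|))
      = √2 * (|Real.cos (δ / 2)| * |Real.cos x| * |Real.sin h|) := key
    _ ≤ 2 * (1 * Real.cos x * h) := by
      rw [abs_of_nonneg hcos]
      gcongr
      · exact Real.abs_cos_le_one _
      · exact (Real.abs_sin_le_abs).trans (abs_of_pos hh).le
    _ = 8 * π / δ ^ 2 * (T * (x ^ 2 * Real.cos x / 2)) := by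
      linear_combination -Real.cos x * hscale
    _ ≤ 8 * π / δ ^ 2 * (T * (|Real.sin (x - h)| * |Real.sin (x + h)|)) := by
      rw [abs_of_pos hsin_sub, abs_of_pos hsin_add]
      gcongr
      linarith

theorem stmt_4_general (T : ℕ) (δ : ℝ)
    (h1 : 2 * Real.pi ≤ |δ|) (h2 : |δ| ≤ Real.pi * T) :
    ‖amp T δ‖ ≤ 8 * Real.pi / δ ^ 2 := by
  rw [← norm_amp_abs, ← sq_abs]
  exact norm_amp_le_of_two_pi_le T h1 h2

theorem stmt_4 (T : ℕ) (hT : 3 ≤ T) (δ : ℝ)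
    (h1 : 2 * Real.pi ≤ |δ|) (h2 : |δ| ≤ Real.pi * T) :
    ‖amp T δ‖ ≤ 8 * Real.pi / δ ^ 2 :=
  stmt_4_general T δ h1 h2
end

section
/- For every integer T ≥ 3 and every real δ with 2π ≤ δ ≤ πT, the amplitude magnitude obeys the intermediate bound |α_T(δ)| ≤ 2√2 · π · cos(δ/(2T)) / ( (δ² − π²) · (1 − (δ² + π²)/(12 T²)) ). -/
open Finset
open scoped Real

theorem Real.mul_mul_one_sub_le_sin_mul_sin {a b : ℝ} (ha : 0 ≤ a) (hb : 0 ≤ b)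
    (ha6 : a ^ 2 ≤ 6) (hb6 : b ^ 2 ≤ 6) :
    a * b * (1 - (a ^ 2 + b ^ 2) / 6) ≤ Real.sin a * Real.sin b := by
  have hcubic_a : 0 ≤ a - a ^ 3 / 6 := by nlinarith
  have hcubic_b : 0 ≤ b - b ^ 3 / 6 := by nlinarith
  calc a * b * (1 - (a ^ 2 + b ^ 2) / 6)
      ≤ (a - a ^ 3 / 6) * (b - b ^ 3 / 6) := by nlinarith [pow_nonneg (mul_nonneg ha hb) 3]
    _ ≤ Real.sin a * Real.sin b :=
      mul_le_mul (Real.sin_ge_sub_cube ha) (Real.sin_ge_sub_cube hb) hcubic_b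
        (hcubic_a.trans (Real.sin_ge_sub_cube ha))

namespace Complex

noncomputable def sineWindowSum (n : ℕ) (c d : ℂ) : ℂ :=
  ∑ τ ∈ range n, sin ((2 * τ + 1) * c) * exp (2 * τ * d * I)

theorem sin_mul_sum_exp_odd_mul_I (z : ℂ) (n : ℕ) :
    sin z * ∑ τ ∈ range n, exp ((2 * τ + 1) * z * I) = exp (n * z * I) * sin (n * z) := by
  set q := exp (z * I)
  have hq : q ≠ 0 := exp_ne_zero _
  have hexp : ∀ m : ℕ, exp (m * z * I) = q ^ m := fun m => by
    rw [mul_assoc, exp_nat_mul]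
  have hsin : ∀ m : ℕ, sin (m * z) = (q⁻¹ ^ m - q ^ m) * I / 2 := fun m => by
    rw [← hexp, inv_pow, ← hexp, ← exp_neg, eq_div_iff two_ne_zero, mul_comm, two_sin]
    ring_nf
  have hterm : ∀ τ : ℕ, exp ((2 * τ + 1) * z * I) = q * (q ^ 2) ^ τ := fun τ => by
    rw [← pow_mul, ← pow_succ', ← hexp]
    push_cast
    ring_nf
  have hgeom := geom_sum_mul (q ^ 2) n
  have hsin_one : sin z = (q⁻¹ - q) * I / 2 := by simpa using hsin 1
  rw [hsin_one, hsin n, hexp, sum_congr rfl fun τ _ => hterm τ, ← mul_sum, inv_pow]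
  field_simp
  linear_combination (-1 : ℂ) * hgeom

theorem sin_odd_mul_mul_exp_eq (c d : ℂ) (τ : ℕ) :
    sin ((2 * τ + 1) * c) * exp (2 * τ * d * I) =
      exp (-d * I) * (I / 2) *
        (exp ((2 * τ + 1) * (d - c) * I) - exp ((2 * τ + 1) * (d + c) * I)) := by
  have hminus : exp (-d * I) * exp ((2 * τ + 1) * (d - c) * I) =
      exp (-((2 * τ + 1) * c) * I) * exp (2 * τ * d * I) := by
    rw [← exp_add, ← exp_add]; ring_nf
  have hplus : exp (-d * I) * exp ((2 * τ + 1) * (d + c) * I) =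
      exp ((2 * τ + 1) * c * I) * exp (2 * τ * d * I) := by
    rw [← exp_add, ← exp_add]; ring_nf
  linear_combination (exp (2 * τ * d * I) / 2) * two_sin ((2 * τ + 1) * c) +
    (I / 2) * (hplus - hminus)

theorem sin_mul_sin_mul_sineWindowSum (c d : ℂ) (n : ℕ) :
    sin (d + c) * sin (d - c) * sineWindowSum n c d =
      exp (-d * I) * (I / 2) *
        (sin (d + c) * (exp (n * (d - c) * I) * sin (n * (d - c))) -
          sin (d - c) * (exp (n * (d + c) * I) * sin (n * (d + c)))) := by
  simp only [sineWindowSum, sum_congr rfl fun τ _ => sin_odd_mul_mul_exp_eq c d τ, ← mul_sum,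
    sum_sub_distrib, ← mul_assoc, ← sin_mul_sum_exp_odd_mul_I]
  ring

theorem sin_mul_sin_mul_sineWindowSum_of_mul_eq_pi_div_two {c : ℂ} (d : ℂ) {n : ℕ}
    (hc : n * c = π / 2) :
    sin (d + c) * sin (d - c) * sineWindowSum n c d =
      exp ((n * d - d) * I) * cos (n * d) * (sin (d - c) - sin (d + c)) / 2 := by
  -- `n (d ± c) = n d ± π/2`, so both boundary terms `e^{in(d ∓ c)} sin(n(d ∓ c))` equal
  -- `I e^{ind} cos(nd)`.
  have hplus : n * (d + c) = n * d + π / 2 := by rw [mul_add, hc]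
  have hminus : n * (d - c) = n * d - π / 2 := by rw [mul_sub, hc]
  have hexp : exp ((n * d - d) * I) = exp (-d * I) * exp (n * d * I) := by
    rw [← exp_add]; ring_nf
  rw [sin_mul_sin_mul_sineWindowSum, hplus, hminus, sin_add_pi_div_two,
    sin_sub_pi_div_two, add_mul, sub_mul, exp_add, exp_sub, exp_pi_div_two_mul_I, hexp]
  field_simp
  linear_combination (-(cos (d * n)) * sin (d - c)) * I_sq

theorem abs_sin_mul_sin_mul_norm_sineWindowSum_le {c : ℝ} (d : ℝ) {n : ℕ}
    (hc : n * c = π / 2) :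
    |Real.sin (d + c) * Real.sin (d - c)| * ‖sineWindowSum n c d‖ ≤ |Real.sin c * Real.cos d| := by
  have hcC : (n : ℂ) * c = π / 2 := by exact_mod_cast congrArg ofReal hc
  have hnorm := congrArg norm (sin_mul_sin_mul_sineWindowSum_of_mul_eq_pi_div_two d hcC)
  have hdiff : sin (d - c) - sin (d + c) = -(2 * (sin c * cos d)) := by
    rw [sin_sub, sin_add]; ring
  have hphase : ‖exp ((n * d - d : ℝ) * I)‖ = 1 := norm_exp_ofReal_mul_I _
  have hcos : ‖cos (n * d)‖ ≤ 1 := by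
    rw [← ofReal_natCast, ← ofReal_mul, ← ofReal_cos, norm_real, Real.norm_eq_abs]
    exact Real.abs_cos_le_one _
  push_cast at hphase
  rw [hdiff, ← ofReal_add, ← ofReal_sub, ← ofReal_sin, ← ofReal_sin, ← ofReal_sin,
    ← ofReal_cos] at hnorm
  simp only [norm_mul, norm_div, norm_neg, hphase, norm_real, Real.norm_eq_abs] at hnorm
  rw [abs_mul, abs_mul, hnorm, one_mul, mul_div_assoc, mul_div_cancel_left₀ _ (by norm_num)]
  exact mul_le_of_le_one_left (by positivity) hcos

theorem norm_sineWindowSum_le {c d : ℝ} {n : ℕ} (hc : n * c = π / 2)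
    (hdc : 0 < d - c) (hd : d ≤ π / 2) (hsq : (d + c) ^ 2 + (d - c) ^ 2 < 6) :
    ‖sineWindowSum n c d‖ ≤
      c * Real.cos d / ((d + c) * (d - c) * (1 - ((d + c) ^ 2 + (d - c) ^ 2) / 6)) := by
  have hc_pos : 0 < c := by nlinarith [Real.pi_pos, (n.cast_nonneg : (0 : ℝ) ≤ n)]
  have hdc_lt : d + c < π := by nlinarith [Real.pi_gt_three]
  have hcos : 0 ≤ Real.cos d := Real.cos_nonneg_of_mem_Icc ⟨by linarith, hd⟩
  have hsin_pos : 0 < Real.sin (d + c) * Real.sin (d - c) :=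
    mul_pos (Real.sin_pos_of_pos_of_lt_pi (by linarith) hdc_lt)
      (Real.sin_pos_of_pos_of_lt_pi hdc (by linarith))
  have hlower := Real.mul_mul_one_sub_le_sin_mul_sin (a := d + c) (b := d - c) (by linarith)
    hdc.le (by nlinarith) (by nlinarith)
  have hsum := abs_sin_mul_sin_mul_norm_sineWindowSum_le d hc
  rw [abs_of_pos hsin_pos, abs_of_nonneg (mul_nonneg (Real.sin_nonneg_of_nonneg_of_le_pi hc_pos.le
    (by linarith)) hcos)] at hsum
  rw [le_div_iff₀ (mul_pos (by nlinarith) (by linarith))]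
  calc ‖_‖ * _ ≤ ‖_‖ * (Real.sin (d + c) * Real.sin (d - c)) :=
        mul_le_mul_of_nonneg_left hlower (norm_nonneg _)
    _ ≤ Real.sin c * Real.cos d := by linarith
    _ ≤ c * Real.cos d := mul_le_mul_of_nonneg_right (Real.sin_le hc_pos.le) hcos

end Complex

open Complex in
theorem amp_eq (T : ℕ) (δ : ℝ) :
    amp T δ = (Real.sqrt 2 / T : ℝ) * sineWindowSum T (π / (2 * T) : ℝ) (δ / (2 * T) : ℝ) := by
  rw [amp, sineWindowSum, Complex.ofReal_div, Complex.ofReal_natCast]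
  refine congrArg _ (sum_congr rfl fun τ _ => ?_)
  push_cast
  ring_nf

theorem stmt_5 (T : ℕ) (hT : 3 ≤ T) (δ : ℝ)
    (h1 : 2 * Real.pi ≤ δ) (h2 : δ ≤ Real.pi * T) :
    ‖amp T δ‖ ≤
      2 * Real.sqrt 2 * Real.pi * Real.cos (δ / (2 * T)) /
        ((δ ^ 2 - Real.pi ^ 2) * (1 - (δ ^ 2 + Real.pi ^ 2) / (12 * T ^ 2))) := by
  have hT3 : (3 : ℝ) ≤ T := by exact_mod_cast hT
  have hπ := Real.pi_pos
  set c := π / (2 * T) with hc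
  set d := δ / (2 * T) with hd
  have hTc : (T : ℝ) * c = π / 2 := by rw [hc]; field_simp
  have hdc : 0 < d - c := by
    rw [hc, hd, ← sub_div]; exact div_pos (by linarith) (by positivity)
  have hd_le : d ≤ π / 2 := by
    rw [hd, div_le_iff₀ (by positivity)]; linarith
  have hc_le : c ≤ π / 6 := by
    rw [hc, div_le_iff₀ (by positivity)]; nlinarith
  have hsq : (d + c) ^ 2 + (d - c) ^ 2 < 6 := by
    have hc_pos : 0 < c := by positivity
    nlinarith [mul_self_le_mul_self (by linarith) hd_le, mul_self_le_mul_self hc_pos.le hc_le,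
      mul_self_lt_mul_self hπ.le Real.pi_lt_d2]
  have hQ : (d + c) * (d - c) * (1 - ((d + c) ^ 2 + (d - c) ^ 2) / 6) =
      (δ ^ 2 - π ^ 2) * (1 - (δ ^ 2 + π ^ 2) / (12 * T ^ 2)) / (4 * T ^ 2) := by
    rw [hc, hd]; field_simp; ring
  rw [amp_eq, norm_mul, Complex.norm_real, Real.norm_eq_abs, abs_of_nonneg (by positivity)]
  calc Real.sqrt 2 / T * ‖_‖
      ≤ Real.sqrt 2 / T *
          (c * Real.cos d / ((d + c) * (d - c) * (1 - ((d + c) ^ 2 + (d - c) ^ 2) / 6))) := by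
        gcongr
        exact Complex.norm_sineWindowSum_le hTc hdc hd_le hsq
    _ = _ := by rw [hQ, hc]; field_simp; ring
end

section
/- For all reals λ and t₀, and every natural number T, setting δ_k := λ t₀ − 2πk for each integer k, the sum over poorly approximating clock values below the eigenvalue satisfies ∑_{k ∈ {0,…,T−1}, δ_k ≤ −2π} 1/δ_k² < 1/24. -/
open Finset Real

theorem stmt_6 (lam t₀ : ℝ) (T : ℕ) :
    ∑ k ∈ (Finset.range T).filter
        (fun k : ℕ => lam * t₀ - 2 * Real.pi * (k : ℝ) ≤ -(2 * Real.pi)),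
      1 / (lam * t₀ - 2 * Real.pi * (k : ℝ)) ^ 2 < 1 / 24 := by
  have hπ : (0:ℝ) < Real.pi := Real.pi_pos
  set s := (Finset.range T).filter
      (fun k : ℕ => lam * t₀ - 2 * Real.pi * (k : ℝ) ≤ -(2 * Real.pi)) with hs
  set m : ℤ := ⌈lam * t₀ / (2 * Real.pi)⌉ + 1 with hm
  set g : ℕ → ℝ := fun n => 1 / (4 * Real.pi ^ 2) * (1 / (n : ℝ) ^ 2) with hg
  -- g has sum 1/24
  have hgsum : HasSum g (1 / 24) := by
    have h := (hasSum_zeta_two).mul_left (1 / (4 * Real.pi ^ 2))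
    have : 1 / (4 * Real.pi ^ 2) * (Real.pi ^ 2 / 6) = 1 / 24 := by
      field_simp
      ring
    rwa [this] at h
  have hgpos : ∀ n : ℕ, 0 < n → 0 < g n := by
    intro n hn
    apply mul_pos
    · positivity
    · have : (0:ℝ) < (n:ℝ) ^ 2 := by positivity
      positivity
  have hgnonneg : ∀ n : ℕ, 0 ≤ g n := by
    intro n
    rcases Nat.eq_zero_or_pos n with h | h
    · simp [hg, h]
    · exact (hgpos n h).le
  -- the reindexing map
  set e : ℕ → ℕ := fun k => ((k : ℤ) - m).toNat + 1 with he
  -- facts about k ∈ s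
  have hks : ∀ k ∈ s, m ≤ (k : ℤ) ∧ lam * t₀ ≤ 2 * Real.pi * ((m : ℝ) - 1) := by
    intro k hk
    rw [hs, Finset.mem_filter] at hk
    have hk2 : lam * t₀ - 2 * Real.pi * k ≤ -(2 * Real.pi) := hk.2
    have h2π : (0:ℝ) < 2 * Real.pi := by positivity
    have hdiv : lam * t₀ / (2 * Real.pi) + 1 ≤ (k : ℝ) := by
      rw [div_add' _ _ _ h2π.ne', div_le_iff₀ h2π]
      nlinarith
    constructor
    · have hceil : ⌈lam * t₀ / (2 * Real.pi)⌉ ≤ (k : ℤ) - 1 := by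
        rw [Int.ceil_le]
        push_cast
        linarith
      omega
    · have := Int.le_ceil (lam * t₀ / (2 * Real.pi))
      have hm' : (m : ℝ) - 1 = (⌈lam * t₀ / (2 * Real.pi)⌉ : ℝ) := by
        rw [hm]; push_cast; ring
      rw [hm']
      rw [div_le_iff₀ h2π] at this
      linarith
  -- termwise bound
  have hterm : ∀ k ∈ s, 1 / (lam * t₀ - 2 * Real.pi * (k : ℝ)) ^ 2 ≤ g (e k) := by
    intro k hk
    obtain ⟨h1, h2⟩ := hks k hk
    have hek : ((e k : ℝ)) = (k : ℝ) - (m : ℝ) + 1 := by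
      have h0 : (0:ℤ) ≤ (k : ℤ) - m := by omega
      have h2' : ((((k:ℤ) - m).toNat : ℕ) : ℝ) = (k:ℝ) - (m:ℝ) := by
        rw [← Int.cast_natCast, Int.toNat_of_nonneg h0]
        push_cast
        ring
      simp only [he]
      rw [Nat.cast_add, Nat.cast_one, h2']
    have hle : lam * t₀ - 2 * Real.pi * (k : ℝ) ≤ -(2 * Real.pi * (e k)) := by
      rw [hek]
      have : (m : ℝ) ≤ (k : ℝ) := by exact_mod_cast h1
      nlinarith
    have hpos : (0:ℝ) < 2 * Real.pi * (e k) := by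
      have : (1:ℝ) ≤ (e k : ℝ) := by exact_mod_cast Nat.one_le_iff_ne_zero.mpr (by simp [he])
      nlinarith
    have hsq : (2 * Real.pi * (e k)) ^ 2 ≤ (lam * t₀ - 2 * Real.pi * (k : ℝ)) ^ 2 := by
      nlinarith
    have hsqpos : (0:ℝ) < (2 * Real.pi * (e k)) ^ 2 := by positivity
    calc 1 / (lam * t₀ - 2 * Real.pi * (k : ℝ)) ^ 2
        ≤ 1 / (2 * Real.pi * (e k)) ^ 2 := by
          apply one_div_le_one_div_of_le hsqpos hsq
      _ = g (e k) := by
          rw [hg]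
          have : ((e k : ℝ)) ≠ 0 := by positivity
          field_simp
          ring
  -- injective on s
  have hinj : Set.InjOn e s := by
    intro a ha b hb hab
    have h1 := (hks a ha).1
    have h2 := (hks b hb).1
    have hab' : (((a:ℤ) - m).toNat) = (((b:ℤ) - m).toNat) := by simpa [he] using hab
    omega
  -- the witness outside the image
  set w : ℕ := T + m.natAbs + 1 with hw
  have hwim : w ∉ s.image e := by
    intro hcon
    obtain ⟨k, hk, hek⟩ := Finset.mem_image.mp hcon
    rw [hs, Finset.mem_filter, Finset.mem_range] at hk
    have hkT : k < T := hk.1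
    simp only [he, hw] at hek
    omega
  calc ∑ k ∈ s, 1 / (lam * t₀ - 2 * Real.pi * (k : ℝ)) ^ 2
      ≤ ∑ k ∈ s, g (e k) := Finset.sum_le_sum hterm
    _ = ∑ n ∈ s.image e, g n := (Finset.sum_image (fun a ha b hb => hinj ha hb)).symm
    _ < ∑ n ∈ insert w (s.image e), g n := by
        rw [Finset.sum_insert hwim]
        have : 0 < g w := hgpos w (by omega)
        linarith
    _ ≤ 1 / 24 := by
        have := sum_le_hasSum (insert w (s.image e)) (fun n _ => hgnonneg n) hgsum
        exact this
end
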